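/- (L1 distance between occupancy measures of two transition functions, combining Lemmas B.1 and B.2) Let P and P' be two transition functions and π a policy on an episodic loop-free MDP, and for x ∈ X_s (s ≤ L−1) and a ∈ A write ξ(x,a) = Σ_{x'∈X_{s+1}} | P(x'|x,a) − P'(x'|x,a) |. Then Σ_{k=0}^{L−1} Σ_{x∈X_k} Σ_{a∈A} Σ_{x'∈X_{k+1}} | q^{P,π}(x,a,x') − q^{P',π}(x,a,x') | ≤ Σ_{k=0}^{L−1} Σ_{s=0}^{k} Σ_{x∈X_s} Σ_{a∈A} q^{P',π}(x,a)·ξ(x,a) ≤ L·Σ_{s=0}^{L−1} Σ_{x∈X_s} Σ_{a∈A} q^{P',π}(x,a)·ξ(x,a). -/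

import Mathlib

open Finset

/-- An episodic loop-free MDP: layers `X 0, …, X L` (encoded as an `ℕ`-indexed family of
types, so distinct layers are automatically disjoint), with `X 0` and `X L` singletons,
and a finite nonempty action set `A`. -/
structure LoopFreeMDP where
  L : ℕ
  hL : 1 ≤ L
  X : ℕ → Type
  instFintypeX : ∀ k, Fintype (X k)
  instDecEqX : ∀ k, DecidableEq (X k)
  nonemptyX : ∀ k, k ≤ L → Nonempty (X k)
  x0 : X 0
  hX0 : ∀ y : X 0, y = x0
  xL : X L
  hXL : ∀ y : X L, y = xL
  A : Type
  instFintypeA : Fintype A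
  instDecEqA : DecidableEq A
  instNonemptyA : Nonempty A

attribute [instance] LoopFreeMDP.instFintypeX LoopFreeMDP.instDecEqX
  LoopFreeMDP.instFintypeA LoopFreeMDP.instDecEqA LoopFreeMDP.instNonemptyA

namespace LoopFreeMDP

/-- The type of candidate transition functions. -/
abbrev TransKer (M : LoopFreeMDP) := ∀ k, M.X k → M.A → M.X (k + 1) → ℝ

/-- The type of candidate policies. -/
abbrev PolicyKer (M : LoopFreeMDP) := ∀ k, M.X k → M.A → ℝ

/-- `P` is a transition function: for every layer `k < L`, state and action,
`P (·|x,a)` is a probability vector on `X (k+1)`. -/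
def IsTransition (M : LoopFreeMDP) (P : M.TransKer) : Prop :=
  ∀ k, k < M.L → ∀ (x : M.X k) (a : M.A),
    (∀ x', 0 ≤ P k x a x') ∧ (∑ x', P k x a x' = 1)

/-- `π` is a policy: for every layer `k < L` and state, `π (·|x)` is a probability
vector on `A`. -/
def IsPolicy (M : LoopFreeMDP) (π : M.PolicyKer) : Prop :=
  ∀ k, k < M.L → ∀ x : M.X k,
    (∀ a, 0 ≤ π k x a) ∧ (∑ a, π k x a = 1)

/-- The state-visitation probabilities `μ_k`, defined layer by layer. -/
def mu (M : LoopFreeMDP) (P : M.TransKer) (π : M.PolicyKer) : ∀ k, M.X k → ℝ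
  | 0, _ => 1
  | k + 1, x' => ∑ x : M.X k, ∑ a : M.A, M.mu P π k x * π k x a * P k x a x'

/-- The occupancy measure `q^{P,π}(x,a,x') = μ_k(x)·π(a|x)·P(x'|x,a)`. -/
def occ (M : LoopFreeMDP) (P : M.TransKer) (π : M.PolicyKer)
    (k : ℕ) (x : M.X k) (a : M.A) (x' : M.X (k + 1)) : ℝ :=
  M.mu P π k x * π k x a * P k x a x'

end LoopFreeMDP

/-!
The two occupancy measures differ at layer `k` for two reasons: the state distributions `μ_k`
already differ, or the transitions out of layer `k` differ. Writing
`q − q' = (μ − μ')·π·P + μ'·π·(P − P')` and using that `π` and `P` are probability vectors,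
the `ℓ¹` distance of the occupancy measures at layer `k` is at most the `ℓ¹` distance of
`μ_k, μ'_k` plus the `q'`-weighted transition error `Σ_{x,a} q'(x,a)·ξ(x,a)` of layer `k`.
Marginalising, the distance of `μ_{k+1}, μ'_{k+1}` is at most that of the occupancy measures
at layer `k`, so by induction the distance of `μ_k, μ'_k` is at most the sum of the transition errors of the
layers below `k`. Summing over `k` counts each layer's error at most `L` times.
-/

theorem Finset.sum_range_sum_range_succ_le_nsmul {β : Type*} [AddCommMonoid β] [PartialOrder β]
    [IsOrderedAddMonoid β] {e : ℕ → β} {n : ℕ} (he : ∀ s < n, 0 ≤ e s) :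
    ∑ k ∈ range n, ∑ s ∈ range (k + 1), e s ≤ n • ∑ s ∈ range n, e s := by
  rw [← card_range n, ← sum_const, card_range]
  exact sum_le_sum fun k hk => sum_le_sum_of_subset_of_nonneg
    (range_subset_range.mpr (mem_range.mp hk)) fun s hs _ => he s (mem_range.mp hs)

namespace LoopFreeMDP

variable (M : LoopFreeMDP) (P P' : M.TransKer) (π : M.PolicyKer)

def muL1Dist (k : ℕ) : ℝ :=
  ∑ x : M.X k, |M.mu P π k x - M.mu P' π k x|

def occL1Dist (k : ℕ) : ℝ :=
  ∑ x : M.X k, ∑ a : M.A, ∑ x' : M.X (k + 1), |M.occ P π k x a x' - M.occ P' π k x a x'|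

/-- The transition error `Σ_{x ∈ X_k, a} q^{P',π}(x,a)·ξ(x,a)` of layer `k`. -/
def transErr (k : ℕ) : ℝ :=
  ∑ x : M.X k, ∑ a : M.A,
    (∑ x' : M.X (k + 1), M.occ P' π k x a x') * ∑ x' : M.X (k + 1), |P k x a x' - P' k x a x'|

variable {M P P' π}

theorem mu_nonneg (hP : M.IsTransition P) (hπ : M.IsPolicy π) :
    ∀ {k : ℕ}, k ≤ M.L → ∀ x : M.X k, 0 ≤ M.mu P π k x
  | 0, _, _ => by simp [mu]
  | k + 1, hk, x' => by
    have hk : k < M.L := hk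
    exact sum_nonneg fun x _ => sum_nonneg fun a _ =>
      mul_nonneg (mul_nonneg (mu_nonneg hP hπ hk.le x) ((hπ k hk x).1 a)) ((hP k hk x a).1 x')

theorem occ_nonneg (hP : M.IsTransition P) (hπ : M.IsPolicy π) {k : ℕ} (hk : k < M.L)
    (x : M.X k) (a : M.A) (x' : M.X (k + 1)) : 0 ≤ M.occ P π k x a x' :=
  mul_nonneg (mul_nonneg (mu_nonneg hP hπ hk.le x) ((hπ k hk x).1 a)) ((hP k hk x a).1 x')

theorem sum_occ_eq (hP : M.IsTransition P) {k : ℕ} (hk : k < M.L) (x : M.X k) (a : M.A) :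
    ∑ x' : M.X (k + 1), M.occ P π k x a x' = M.mu P π k x * π k x a := by
  simp only [occ, ← mul_sum, (hP k hk x a).2, mul_one]

theorem transErr_nonneg (hP' : M.IsTransition P') (hπ : M.IsPolicy π) {k : ℕ} (hk : k < M.L) :
    0 ≤ M.transErr P P' π k :=
  sum_nonneg fun x _ => sum_nonneg fun a _ => mul_nonneg
    (sum_nonneg fun x' _ => occ_nonneg hP' hπ hk x a x') (sum_nonneg fun _ _ => abs_nonneg _)

theorem abs_occ_sub_occ_le (hP : M.IsTransition P) (hP' : M.IsTransition P')
    (hπ : M.IsPolicy π) {k : ℕ} (hk : k < M.L) (x : M.X k) (a : M.A) (x' : M.X (k + 1)) :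
    |M.occ P π k x a x' - M.occ P' π k x a x'|
      ≤ |M.mu P π k x - M.mu P' π k x| * π k x a * P k x a x'
        + M.mu P' π k x * π k x a * |P k x a x' - P' k x a x'| := by
  have hdecomp : M.occ P π k x a x' - M.occ P' π k x a x'
      = (M.mu P π k x - M.mu P' π k x) * π k x a * P k x a x'
        + M.mu P' π k x * π k x a * (P k x a x' - P' k x a x') := by
    simp only [occ]; ring
  rw [hdecomp]
  refine (abs_add_le _ _).trans_eq ?_
  rw [abs_mul, abs_mul, abs_mul, abs_mul, abs_of_nonneg ((hπ k hk x).1 a),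
    abs_of_nonneg ((hP k hk x a).1 x'), abs_of_nonneg (mu_nonneg hP' hπ hk.le x)]

theorem occL1Dist_le (hP : M.IsTransition P) (hP' : M.IsTransition P') (hπ : M.IsPolicy π)
    {k : ℕ} (hk : k < M.L) :
    M.occL1Dist P P' π k ≤ M.muL1Dist P P' π k + M.transErr P P' π k := by
  calc M.occL1Dist P P' π k
      ≤ ∑ x : M.X k, ∑ a : M.A, ∑ x' : M.X (k + 1),
          (|M.mu P π k x - M.mu P' π k x| * π k x a * P k x a x'
            + M.mu P' π k x * π k x a * |P k x a x' - P' k x a x'|) := by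
        exact sum_le_sum fun x _ => sum_le_sum fun a _ => sum_le_sum fun x' _ =>
          abs_occ_sub_occ_le hP hP' hπ hk x a x'
    _ = ∑ x : M.X k, |M.mu P π k x - M.mu P' π k x| * ∑ a : M.A, π k x a * ∑ x', P k x a x'
          + M.transErr P P' π k := by
        simp only [transErr, sum_occ_eq hP' hk, sum_add_distrib, mul_sum, mul_assoc]
    _ = M.muL1Dist P P' π k + M.transErr P P' π k := by
        simp only [(hP k hk _ _).2, mul_one, (hπ k hk _).2, muL1Dist]

theorem muL1Dist_succ_le (k : ℕ) : M.muL1Dist P P' π (k + 1) ≤ M.occL1Dist P P' π k := by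
  calc M.muL1Dist P P' π (k + 1)
      = ∑ x' : M.X (k + 1), |∑ x : M.X k, ∑ a : M.A,
          (M.occ P π k x a x' - M.occ P' π k x a x')| := by
        simp only [muL1Dist, mu, occ, sum_sub_distrib]
    _ ≤ ∑ x' : M.X (k + 1), ∑ x : M.X k, ∑ a : M.A,
          |M.occ P π k x a x' - M.occ P' π k x a x'| := by
        gcongr with x'
        exact (abs_sum_le_sum_abs _ _).trans (sum_le_sum fun x _ => abs_sum_le_sum_abs _ _)
    _ = M.occL1Dist P P' π k := by
        rw [sum_comm]; exact sum_congr rfl fun x _ => sum_comm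

theorem muL1Dist_le (hP : M.IsTransition P) (hP' : M.IsTransition P') (hπ : M.IsPolicy π) :
    ∀ {k : ℕ}, k ≤ M.L → M.muL1Dist P P' π k ≤ ∑ s ∈ range k, M.transErr P P' π s
  | 0, _ => by simp [muL1Dist, mu]
  | k + 1, hk => by
    have hk : k < M.L := hk
    calc M.muL1Dist P P' π (k + 1)
        ≤ M.occL1Dist P P' π k := muL1Dist_succ_le k
      _ ≤ M.muL1Dist P P' π k + M.transErr P P' π k := occL1Dist_le hP hP' hπ hk
      _ ≤ ∑ s ∈ range (k + 1), M.transErr P P' π s := by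
        rw [sum_range_succ]
        gcongr
        exact muL1Dist_le hP hP' hπ hk.le

theorem occL1Dist_le_sum_transErr (hP : M.IsTransition P) (hP' : M.IsTransition P')
    (hπ : M.IsPolicy π) {k : ℕ} (hk : k < M.L) :
    M.occL1Dist P P' π k ≤ ∑ s ∈ range (k + 1), M.transErr P P' π s := by
  rw [sum_range_succ]
  exact (occL1Dist_le hP hP' hπ hk).trans (by gcongr; exact muL1Dist_le hP hP' hπ hk.le)

end LoopFreeMDP

/-- **L1 distance between occupancy measures of two transition functions** (combining Lemmas
B.1 and B.2). With `ξ(x,a) = ‖P(·|x,a) − P'(·|x,a)‖₁`,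
`‖q^{P,π} − q^{P',π}‖₁ ≤ Σ_{k<L} Σ_{s≤k} Σ_{x,a} q^{P',π}(x,a)·ξ(x,a)
  ≤ L·Σ_{s<L} Σ_{x,a} q^{P',π}(x,a)·ξ(x,a)`. -/
theorem occupancy_L1_bound (M : LoopFreeMDP)
    (P P' : M.TransKer) (π : M.PolicyKer)
    (hP : M.IsTransition P) (hP' : M.IsTransition P') (hπ : M.IsPolicy π) :
    (∑ k ∈ Finset.range M.L, ∑ x : M.X k, ∑ a : M.A, ∑ x' : M.X (k + 1),
        |M.occ P π k x a x' - M.occ P' π k x a x'|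
      ≤ ∑ k ∈ Finset.range M.L, ∑ s ∈ Finset.range (k + 1), ∑ x : M.X s, ∑ a : M.A,
          (∑ x' : M.X (s + 1), M.occ P' π s x a x') *
            (∑ x' : M.X (s + 1), |P s x a x' - P' s x a x'|)) ∧
    (∑ k ∈ Finset.range M.L, ∑ s ∈ Finset.range (k + 1), ∑ x : M.X s, ∑ a : M.A,
          (∑ x' : M.X (s + 1), M.occ P' π s x a x') *
            (∑ x' : M.X (s + 1), |P s x a x' - P' s x a x'|)
      ≤ (M.L : ℝ) * ∑ s ∈ Finset.range M.L, ∑ x : M.X s, ∑ a : M.A,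
          (∑ x' : M.X (s + 1), M.occ P' π s x a x') *
            (∑ x' : M.X (s + 1), |P s x a x' - P' s x a x'|)) := by
  refine ⟨sum_le_sum fun k hk => M.occL1Dist_le_sum_transErr hP hP' hπ (mem_range.mp hk), ?_⟩
  rw [← nsmul_eq_mul]
  exact sum_range_sum_range_succ_le_nsmul fun s hs => M.transErr_nonneg hP' hπ hs
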